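/- (Source coding, converse part.) Let ρ be a density matrix on ℂ^d with von Neumann entropy S(ρ) = −Tr(ρ log₂ ρ), and fix R < S(ρ). For every δ > 0 there exists N₀ ∈ ℕ such that for every N ≥ N₀, every m ∈ ℕ with m ≤ 2^{NR}, every finite family {E_i} of m × d^N matrices with Σ_i E_iᴴE_i = I, and every finite family {D_j} of d^N × m matrices with Σ_j D_jᴴD_j = I, the entanglement fidelity of the composite channel satisfies Σ_{i,j} |Tr(ρ^{⊗N} D_j E_i)|² ≤ δ. -/

import Mathlib

set_option linter.unusedSectionVars false
set_option maxHeartbeats 1000000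


open Matrix
open scoped ComplexOrder

noncomputable section

/-- `N`-fold tensor (Kronecker) power of a matrix. -/
def tpow {d : Type*} (ρ : Matrix d d ℂ) (N : ℕ) : Matrix (Fin N → d) (Fin N → d) ℂ :=
  Matrix.of fun a b => ∏ k, ρ (a k) (b k)

/-- The von Neumann entropy `S(ρ) = −Tr(ρ log₂ ρ) = −Σ_x p_x log₂ p_x`, computed from the
eigenvalues of a Hermitian matrix. -/
def vnEntropy {n : Type*} [Fintype n] [DecidableEq n] {ρ : Matrix n n ℂ}
    (hρ : ρ.IsHermitian) : ℝ :=
  -∑ i, hρ.eigenvalues i * Real.logb 2 (hρ.eigenvalues i)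


section TpowLemmas
variable {d : Type*} [Fintype d] [DecidableEq d]

lemma tpow_mul (A B : Matrix d d ℂ) (N : ℕ) : tpow (A * B) N = tpow A N * tpow B N := by
  ext a b
  simp only [tpow, Matrix.of_apply, Matrix.mul_apply]
  calc ∏ k, ∑ c, A (a k) c * B c (b k)
      = ∑ x ∈ Fintype.piFinset (fun _ : Fin N => (Finset.univ : Finset d)),
          ∏ k, (A (a k) (x k) * B (x k) (b k)) := Finset.prod_univ_sum _ _
    _ = ∑ x : Fin N → d, (∏ k, A (a k) (x k)) * ∏ k, B (x k) (b k) := by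
        rw [Fintype.piFinset_univ]
        exact Finset.sum_congr rfl fun x _ => Finset.prod_mul_distrib

lemma tpow_one (N : ℕ) : tpow (1 : Matrix d d ℂ) N = 1 := by
  ext a b
  simp only [tpow, Matrix.of_apply, Matrix.one_apply]
  by_cases h : a = b
  · subst h; simp
  · obtain ⟨k, hk⟩ := Function.ne_iff.mp h
    rw [if_neg h]
    exact Finset.prod_eq_zero (Finset.mem_univ k) (by simp [hk])

lemma tpow_conjTranspose (A : Matrix d d ℂ) (N : ℕ) : tpow Aᴴ N = (tpow A N)ᴴ := by
  ext a b
  simp only [tpow, Matrix.of_apply, Matrix.conjTranspose_apply]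
  exact (star_prod _ _).symm

lemma tpow_diagonal (f : d → ℂ) (N : ℕ) :
    tpow (diagonal f) N = diagonal (fun x : Fin N → d => ∏ k, f (x k)) := by
  ext a b
  simp only [tpow, Matrix.of_apply, Matrix.diagonal_apply]
  by_cases h : a = b
  · subst h; simp
  · obtain ⟨k, hk⟩ := Function.ne_iff.mp h
    rw [if_neg h]
    exact Finset.prod_eq_zero (Finset.mem_univ k) (by simp [hk])

end TpowLemmas

-- bridging lemma
lemma trace_ct_mul_self {P Q : Type*} [Fintype P] [Fintype Q] (A : Matrix P Q ℂ) :
    (Aᴴ * A).trace = ((∑ q, ∑ p, ‖A p q‖ ^ 2 : ℝ) : ℂ) := by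
  simp only [Matrix.trace, Matrix.diag, Matrix.mul_apply, Matrix.conjTranspose_apply]
  push_cast
  simp_rw [Complex.star_def, Complex.conj_mul']

-- L1
lemma norm_trace_sq_le {m : ℕ} (M : Matrix (Fin m) (Fin m) ℂ) :
    ‖M.trace‖ ^ 2 ≤ m * ∑ β, ∑ α, ‖M α β‖ ^ 2 := by
  have h1 : ‖M.trace‖ ≤ ∑ α, ‖M α α‖ := norm_sum_le _ _
  have h2 : ‖M.trace‖ ^ 2 ≤ (∑ α, ‖M α α‖) ^ 2 := by
    apply pow_le_pow_left₀ (norm_nonneg _) h1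
  refine h2.trans ?_
  have h3 : (∑ α, ‖M α α‖) ^ 2 ≤ (Finset.univ.card : ℝ) * ∑ α, ‖M α α‖ ^ 2 :=
    sq_sum_le_card_mul_sum_sq
  rw [Finset.card_univ, Fintype.card_fin] at h3
  refine h3.trans ?_
  gcongr with β hβ
  exact Finset.single_le_sum (f := fun α => ‖M α β‖ ^ 2)
    (fun _ _ => by positivity) (Finset.mem_univ β)

-- L2 weighted CS
lemma weighted_cs {ι : Type*} [Fintype ι] (v a : ι → ℝ) (hv : ∀ x, 0 ≤ v x) :
    (∑ x, v x * a x) ^ 2 ≤ (∑ x, v x) * ∑ x, v x * a x ^ 2 := by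
  have := Finset.sum_mul_sq_le_sq_mul_sq Finset.univ
    (fun x => Real.sqrt (v x)) (fun x => Real.sqrt (v x) * a x)
  calc (∑ x, v x * a x) ^ 2
      = (∑ x, Real.sqrt (v x) * (Real.sqrt (v x) * a x)) ^ 2 := by
        congr 1; refine Finset.sum_congr rfl fun x _ => ?_
        rw [← mul_assoc, Real.mul_self_sqrt (hv x)]
    _ ≤ (∑ x, Real.sqrt (v x) ^ 2) * ∑ x, (Real.sqrt (v x) * a x) ^ 2 := this
    _ = (∑ x, v x) * ∑ x, v x * a x ^ 2 := by
        congr 1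
        · exact Finset.sum_congr rfl fun x _ => Real.sq_sqrt (hv x)
        · refine Finset.sum_congr rfl fun x _ => ?_
          rw [mul_pow, Real.sq_sqrt (hv x)]

lemma ct_mul_apply_self {Y X : Type*} [Fintype Y] (K : Matrix Y X ℂ) (x : X) :
    (Kᴴ * K) x x = ((∑ y, ‖K y x‖ ^ 2 : ℝ) : ℂ) := by
  simp only [Matrix.mul_apply, Matrix.conjTranspose_apply]
  push_cast
  simp_rw [Complex.star_def, Complex.conj_mul']

lemma partB {X : Type*} [Fintype X] [DecidableEq X] {m nE nD : ℕ}
    (v : X → ℝ) (hv : ∀ x, 0 ≤ v x)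
    (E : Fin nE → Matrix (Fin m) X ℂ) (hE : ∑ i, (E i)ᴴ * E i = 1)
    (D : Fin nD → Matrix X (Fin m) ℂ) (hD : ∑ j, (D j)ᴴ * D j = 1) :
    ∑ i, ∑ j, ‖(Matrix.diagonal (fun x => (v x : ℂ)) * (D j * E i)).trace‖ ^ 2
      ≤ (∑ x, v x) ^ 2 := by
  have hK : ∑ i, ∑ j, ((D j * E i)ᴴ * (D j * E i)) = (1 : Matrix X X ℂ) := by
    have h1 : ∀ i, ∑ j, ((D j * E i)ᴴ * (D j * E i)) = (E i)ᴴ * E i := by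
      intro i
      have h2 : ∀ j, (D j * E i)ᴴ * (D j * E i) = (E i)ᴴ * (((D j)ᴴ * D j) * E i) := by
        intro j
        rw [Matrix.conjTranspose_mul, Matrix.mul_assoc, Matrix.mul_assoc]
      rw [Finset.sum_congr rfl fun j _ => h2 j, ← Matrix.mul_sum, ← Matrix.sum_mul, hD,
        Matrix.one_mul]
    rw [Finset.sum_congr rfl fun i _ => h1 i, hE]
  have hw : ∀ x : X, ∑ i, ∑ j, (∑ y, ‖(D j * E i) y x‖ ^ 2) = 1 := by
    intro x
    have := congrFun (congrFun (congrArg (fun M : Matrix X X ℂ => M) hK) x) x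
    simp only [Matrix.sum_apply] at this
    simp_rw [ct_mul_apply_self] at this
    rw [Matrix.one_apply_eq] at this
    exact_mod_cast this
  have key : ∀ i j, ‖(Matrix.diagonal (fun x => (v x : ℂ)) * (D j * E i)).trace‖ ^ 2
      ≤ (∑ x, v x) * ∑ x, v x * (∑ y, ‖(D j * E i) y x‖ ^ 2) := by
    intro i j
    have htr : (Matrix.diagonal (fun x => (v x : ℂ)) * (D j * E i)).trace
        = ∑ x, (v x : ℂ) * (D j * E i) x x := by
      simp [Matrix.trace, Matrix.diag, Matrix.diagonal_mul]
    have h1 : ‖(Matrix.diagonal (fun x => (v x : ℂ)) * (D j * E i)).trace‖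
        ≤ ∑ x, v x * ‖(D j * E i) x x‖ := by
      rw [htr]
      refine (norm_sum_le _ _).trans_eq ?_
      refine Finset.sum_congr rfl fun x _ => ?_
      rw [norm_mul, Complex.norm_real, Real.norm_eq_abs, abs_of_nonneg (hv x)]
    calc ‖(Matrix.diagonal (fun x => (v x : ℂ)) * (D j * E i)).trace‖ ^ 2
        ≤ (∑ x, v x * ‖(D j * E i) x x‖) ^ 2 := by
          apply pow_le_pow_left₀ (norm_nonneg _) h1
      _ ≤ (∑ x, v x) * ∑ x, v x * ‖(D j * E i) x x‖ ^ 2 := weighted_cs v _ hv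
      _ ≤ (∑ x, v x) * ∑ x, v x * (∑ y, ‖(D j * E i) y x‖ ^ 2) := by
          gcongr with x hx
          · exact Finset.sum_nonneg fun x _ => hv x
          · exact hv x
          · exact Finset.single_le_sum (f := fun y => ‖(D j * E i) y x‖ ^ 2)
              (fun _ _ => by positivity) (Finset.mem_univ x)
  calc ∑ i, ∑ j, ‖(Matrix.diagonal (fun x => (v x : ℂ)) * (D j * E i)).trace‖ ^ 2
      ≤ ∑ i, ∑ j, ((∑ x, v x) * ∑ x, v x * (∑ y, ‖(D j * E i) y x‖ ^ 2)) :=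
        Finset.sum_le_sum fun i _ => Finset.sum_le_sum fun j _ => key i j
    _ = (∑ x, v x) * ∑ x, v x * (∑ i, ∑ j, (∑ y, ‖(D j * E i) y x‖ ^ 2)) := by
        simp_rw [← Finset.mul_sum]
        congr 1
        calc ∑ i, ∑ j, ∑ x, v x * (∑ y, ‖(D j * E i) y x‖ ^ 2)
            = ∑ x, ∑ i, ∑ j, v x * (∑ y, ‖(D j * E i) y x‖ ^ 2) := by
              refine Eq.trans (Finset.sum_congr rfl fun i _ => Finset.sum_comm) ?_
              exact Finset.sum_comm
          _ = ∑ x, v x * (∑ i, ∑ j, (∑ y, ‖(D j * E i) y x‖ ^ 2)) := by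
              refine Finset.sum_congr rfl fun x _ => ?_
              simp_rw [← Finset.mul_sum]
    _ = (∑ x, v x) ^ 2 := by
        simp_rw [hw, mul_one, sq]

lemma partA {X : Type*} [Fintype X] [DecidableEq X] {m nE nD : ℕ}
    (u : X → ℝ) (hu : ∀ x, 0 ≤ u x) (t : ℝ) (hut : ∀ x, u x ≤ t)
    (E : Fin nE → Matrix (Fin m) X ℂ) (hE : ∑ i, (E i)ᴴ * E i = 1)
    (D : Fin nD → Matrix X (Fin m) ℂ) (hD : ∑ j, (D j)ᴴ * D j = 1) :
    ∑ i, ∑ j, ‖(Matrix.diagonal (fun x => (u x : ℂ)) * (D j * E i)).trace‖ ^ 2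
      ≤ (m * t) ^ 2 := by
  set U : Matrix X X ℂ := Matrix.diagonal (fun x => (u x : ℂ)) with hU
  have htr : ∀ i j, (U * (D j * E i)).trace = (E i * (U * D j)).trace := by
    intro i j
    rw [← Matrix.mul_assoc, Matrix.trace_mul_comm]
  -- sum over i of Frobenius norms
  have hEC : ∀ j, ∑ i, (∑ β, ∑ α, ‖(E i * (U * D j)) α β‖ ^ 2)
      = ∑ β, ∑ x, ‖(U * D j) x β‖ ^ 2 := by
    intro j
    have hm : ∑ i, ((E i * (U * D j))ᴴ * (E i * (U * D j))) = (U * D j)ᴴ * (U * D j) := by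
      have h2 : ∀ i, (E i * (U * D j))ᴴ * (E i * (U * D j))
          = (U * D j)ᴴ * (((E i)ᴴ * E i) * (U * D j)) := by
        intro i
        rw [Matrix.conjTranspose_mul, Matrix.mul_assoc, Matrix.mul_assoc]
      rw [Finset.sum_congr rfl fun i _ => h2 i, ← Matrix.mul_sum, ← Matrix.sum_mul, hE,
        Matrix.one_mul]
    have := congrArg Matrix.trace hm
    rw [Matrix.trace_sum] at this
    simp_rw [trace_ct_mul_self] at this
    exact_mod_cast this
  -- bound Frobenius norm of U * D j
  have hUD : ∀ j, ∑ β, ∑ x, ‖(U * D j) x β‖ ^ 2 ≤ t ^ 2 * ∑ β, ∑ x, ‖D j x β‖ ^ 2 := by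
    intro j
    rw [Finset.mul_sum]
    refine Finset.sum_le_sum fun β _ => ?_
    rw [Finset.mul_sum]
    refine Finset.sum_le_sum fun x _ => ?_
    rw [hU, Matrix.diagonal_mul, norm_mul, mul_pow, Complex.norm_real, Real.norm_eq_abs,
      abs_of_nonneg (hu x)]
    have : u x ^ 2 ≤ t ^ 2 := by nlinarith [hu x, hut x]
    nlinarith [sq_nonneg ‖D j x β‖, norm_nonneg (D j x β)]
  have hDm : ∑ j, (∑ β, ∑ x, ‖D j x β‖ ^ 2) = m := by
    have := congrArg Matrix.trace hD
    rw [Matrix.trace_sum] at this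
    simp_rw [trace_ct_mul_self] at this
    rw [Matrix.trace_one, Fintype.card_fin] at this
    exact_mod_cast this
  calc ∑ i, ∑ j, ‖(U * (D j * E i)).trace‖ ^ 2
      = ∑ j, ∑ i, ‖(E i * (U * D j)).trace‖ ^ 2 := by
        simp_rw [htr]; exact Finset.sum_comm
    _ ≤ ∑ j, ∑ i, (m : ℝ) * ∑ β, ∑ α, ‖(E i * (U * D j)) α β‖ ^ 2 :=
        Finset.sum_le_sum fun j _ => Finset.sum_le_sum fun i _ => norm_trace_sq_le _
    _ = (m : ℝ) * ∑ j, ∑ β, ∑ x, ‖(U * D j) x β‖ ^ 2 := by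
        simp_rw [← Finset.mul_sum]
        congr 1
        exact Finset.sum_congr rfl fun j _ => hEC j
    _ ≤ (m : ℝ) * ∑ j, t ^ 2 * ∑ β, ∑ x, ‖D j x β‖ ^ 2 := by
        have h := Finset.sum_le_sum fun j (_ : j ∈ Finset.univ) => hUD j
        have hm0 : (0:ℝ) ≤ m := Nat.cast_nonneg m
        exact mul_le_mul_of_nonneg_left h hm0
    _ = (m : ℝ) * (t ^ 2 * m) := by rw [← Finset.mul_sum, hDm]
    _ = (m * t) ^ 2 := by ring

lemma keyBound {X : Type*} [Fintype X] [DecidableEq X] {m nE nD : ℕ}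
    (q : X → ℝ) (hq : ∀ x, 0 ≤ q x) (t : ℝ) (ht : 0 ≤ t)
    (E : Fin nE → Matrix (Fin m) X ℂ) (hE : ∑ i, (E i)ᴴ * E i = 1)
    (D : Fin nD → Matrix X (Fin m) ℂ) (hD : ∑ j, (D j)ᴴ * D j = 1) :
    ∑ i, ∑ j, ‖(Matrix.diagonal (fun x => (q x : ℂ)) * (D j * E i)).trace‖ ^ 2
      ≤ 2 * (m * t) ^ 2 + 2 * (∑ x ∈ Finset.univ.filter fun x => t < q x, q x) ^ 2 := by
  set u : X → ℝ := fun x => if t < q x then 0 else q x with hu_def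
  set v : X → ℝ := fun x => if t < q x then q x else 0 with hv_def
  have hu : ∀ x, 0 ≤ u x := fun x => by by_cases h : t < q x <;> simp [hu_def, h, hq x]
  have hut : ∀ x, u x ≤ t := fun x => by
    by_cases h : t < q x <;> simp [hu_def, h, ht]
    exact le_of_not_gt h
  have hv : ∀ x, 0 ≤ v x := fun x => by by_cases h : t < q x <;> simp [hv_def, h, hq x]
  have hsplit : Matrix.diagonal (fun x => (q x : ℂ))
      = Matrix.diagonal (fun x => (u x : ℂ)) + Matrix.diagonal (fun x => (v x : ℂ)) := by
    ext x y
    simp only [Matrix.add_apply, Matrix.diagonal_apply]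
    split_ifs with h
    · by_cases h2 : t < q x <;> simp [hu_def, hv_def, h2]
    · simp
  have hfil : ∑ x ∈ Finset.univ.filter fun x => t < q x, q x = ∑ x, v x := by
    rw [Finset.sum_filter]
  have hsq : ∀ a b : ℂ, ‖a + b‖ ^ 2 ≤ 2 * ‖a‖ ^ 2 + 2 * ‖b‖ ^ 2 := by
    intro a b
    have h1 := norm_add_le a b
    have h2 : ‖a + b‖ ^ 2 ≤ (‖a‖ + ‖b‖) ^ 2 := pow_le_pow_left₀ (norm_nonneg _) h1 2
    nlinarith [sq_nonneg (‖a‖ - ‖b‖)]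
  have hterm : ∀ i j, ‖(Matrix.diagonal (fun x => (q x : ℂ)) * (D j * E i)).trace‖ ^ 2
      ≤ 2 * ‖(Matrix.diagonal (fun x => (u x : ℂ)) * (D j * E i)).trace‖ ^ 2
        + 2 * ‖(Matrix.diagonal (fun x => (v x : ℂ)) * (D j * E i)).trace‖ ^ 2 := by
    intro i j
    rw [hsplit, Matrix.add_mul, Matrix.trace_add]
    exact hsq _ _
  calc ∑ i, ∑ j, ‖(Matrix.diagonal (fun x => (q x : ℂ)) * (D j * E i)).trace‖ ^ 2
      ≤ ∑ i, ∑ j, (2 * ‖(Matrix.diagonal (fun x => (u x : ℂ)) * (D j * E i)).trace‖ ^ 2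
        + 2 * ‖(Matrix.diagonal (fun x => (v x : ℂ)) * (D j * E i)).trace‖ ^ 2) :=
        Finset.sum_le_sum fun i _ => Finset.sum_le_sum fun j _ => hterm i j
    _ = 2 * (∑ i, ∑ j, ‖(Matrix.diagonal (fun x => (u x : ℂ)) * (D j * E i)).trace‖ ^ 2)
        + 2 * (∑ i, ∑ j, ‖(Matrix.diagonal (fun x => (v x : ℂ)) * (D j * E i)).trace‖ ^ 2) := by
        simp_rw [Finset.sum_add_distrib, Finset.mul_sum]
    _ ≤ 2 * (m * t) ^ 2 + 2 * (∑ x, v x) ^ 2 := by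
        have hA := partA u hu t hut E hE D hD
        have hB := partB v hv E hE D hD
        nlinarith [hA, hB]
    _ = 2 * (m * t) ^ 2 + 2 * (∑ x ∈ Finset.univ.filter fun x => t < q x, q x) ^ 2 := by
        rw [hfil]

lemma cheb {d : ℕ} (p : Fin d → ℝ) (hp : ∀ i, 0 ≤ p i) (hp1 : ∑ i, p i = 1)
    (s : ℝ) (hs : s < ∑ i, p i * (-Real.logb 2 (p i))) (N : ℕ) (hN : 1 ≤ N) :
    ∑ x ∈ Finset.univ.filter
        (fun x : Fin N → Fin d => (2:ℝ) ^ (-(N:ℝ) * s) < ∏ k, p (x k)),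
      (∏ k, p (x k))
    ≤ (∑ i, p i * (-Real.logb 2 (p i) - ∑ i, p i * (-Real.logb 2 (p i))) ^ 2)
        / ((N : ℝ) * (∑ i, p i * (-Real.logb 2 (p i)) - s) ^ 2) := by
  set f : Fin d → ℝ := fun i => -Real.logb 2 (p i) with hf
  set S : ℝ := ∑ i, p i * f i with hS
  set h : Fin d → ℝ := fun i => f i - S with hh
  set V : ℝ := ∑ i, p i * h i ^ 2 with hV
  have hV0 : 0 ≤ V := Finset.sum_nonneg fun i _ => mul_nonneg (hp i) (sq_nonneg _)
  have hzero : ∑ i, p i * h i = 0 := by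
    simp only [hh, mul_sub, Finset.sum_sub_distrib, ← Finset.sum_mul, hp1, one_mul]
    simp [hS]
  have hfact : ∀ (c : Fin N → Fin d → ℝ),
      ∑ x : Fin N → Fin d, ∏ r, c r (x r) = ∏ r, ∑ y, c r y := by
    intro c
    rw [Finset.prod_univ_sum]
    rw [Fintype.piFinset_univ]
  have hinner : ∀ k l : Fin N,
      (∑ x : Fin N → Fin d, (∏ r, p (x r)) * (h (x k) * h (x l)))
        = if k = l then V else 0 := by
    intro k l
    have hc : ∀ x : Fin N → Fin d, (∏ r, p (x r)) * (h (x k) * h (x l))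
        = ∏ r, (p (x r) * ((if r = k then h (x r) else 1) * (if r = l then h (x r) else 1))) := by
      intro x
      rw [Finset.prod_mul_distrib]
      congr 1
      rw [Finset.prod_mul_distrib]
      congr 1 <;> simp [Finset.prod_ite_eq']
    rw [Finset.sum_congr rfl fun x _ => hc x,
      hfact (fun r y => p y * ((if r = k then h y else 1) * (if r = l then h y else 1)))]
    by_cases hkl : k = l
    · subst hkl
      have : ∀ r : Fin N, ∑ y, (p y * ((if r = k then h y else 1) * (if r = k then h y else 1)))
          = if r = k then V else 1 := by
        intro r
        by_cases hr : r = k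
        · subst hr; simp [hV, sq]
        · simp [hr, hp1]
      rw [Finset.prod_congr rfl fun r _ => this r]
      simp [Finset.prod_ite_eq']
    · rw [if_neg hkl]
      refine Finset.prod_eq_zero (Finset.mem_univ k) ?_
      simp [hkl, hzero]
  have ident : ∑ x : Fin N → Fin d, (∏ r, p (x r)) * (∑ k, h (x k)) ^ 2 = N * V := by
    have expand : ∀ x : Fin N → Fin d, (∏ r, p (x r)) * (∑ k, h (x k)) ^ 2
        = ∑ k, ∑ l, (∏ r, p (x r)) * (h (x k) * h (x l)) := by
      intro x
      rw [sq, Finset.sum_mul_sum]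
      simp_rw [Finset.mul_sum]
    rw [Finset.sum_congr rfl fun x _ => expand x]
    rw [Finset.sum_comm]
    calc ∑ k, ∑ x : Fin N → Fin d, ∑ l, (∏ r, p (x r)) * (h (x k) * h (x l))
        = ∑ k, ∑ l, ∑ x : Fin N → Fin d, (∏ r, p (x r)) * (h (x k) * h (x l)) := by
          exact Finset.sum_congr rfl fun k _ => Finset.sum_comm
      _ = ∑ k : Fin N, V := by
          refine Finset.sum_congr rfl fun k _ => ?_
          rw [Finset.sum_congr rfl fun l _ => hinner k l]
          simp
      _ = N * V := by simp [mul_comm]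
  -- pointwise bound on the event
  set ε : ℝ := S - s with hε
  have hε0 : 0 < ε := by simp [hε]; linarith [hs]
  have hN0 : (0:ℝ) < N := by exact_mod_cast Nat.pos_of_ne_zero (by omega)
  have hevent : ∀ x : Fin N → Fin d, (2:ℝ) ^ (-(N:ℝ) * s) < ∏ k, p (x k) →
      ((N:ℝ) * ε) ^ 2 * (∏ r, p (x r)) ≤ (∏ r, p (x r)) * (∑ k, h (x k)) ^ 2 := by
    intro x hx
    have hpos : ∀ k : Fin N, 0 < p (x k) := by
      intro k
      rcases eq_or_lt_of_le (hp (x k)) with heq | hlt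
      · exfalso
        have : (∏ r, p (x r)) = 0 := Finset.prod_eq_zero (Finset.mem_univ k) heq.symm
        rw [this] at hx
        exact absurd hx (not_lt.mpr (le_of_lt (Real.rpow_pos_of_pos two_pos _)))
      · exact hlt
    have hlog : ∑ k, f (x k) < (N:ℝ) * s := by
      have h1 : Real.logb 2 ((2:ℝ) ^ (-(N:ℝ) * s)) < Real.logb 2 (∏ k, p (x k)) :=
        Real.logb_lt_logb one_lt_two (Real.rpow_pos_of_pos two_pos _) hx
      rw [Real.logb_rpow two_pos (by norm_num)] at h1
      rw [Real.logb_prod _ _ (fun k _ => (hpos k).ne')] at h1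
      have h2 : ∑ k, Real.logb 2 (p (x k)) = -∑ k, f (x k) := by
        simp [hf]
      rw [h2] at h1
      linarith
    have hg : (∑ k, h (x k)) = ∑ k, f (x k) - (N:ℝ) * S := by
      simp [hh, Finset.sum_sub_distrib, Finset.card_univ, mul_comm]
    have hg2 : (∑ k, h (x k)) < -((N:ℝ) * ε) := by
      rw [hg, hε]; ring_nf; nlinarith [hlog]
    have hg3 : ((N:ℝ) * ε) ^ 2 ≤ (∑ k, h (x k)) ^ 2 := by
      nlinarith [hg2, mul_pos hN0 hε0]
    calc ((N:ℝ) * ε) ^ 2 * (∏ r, p (x r))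
        ≤ (∑ k, h (x k)) ^ 2 * (∏ r, p (x r)) := by
          apply mul_le_mul_of_nonneg_right hg3 (Finset.prod_nonneg fun r _ => hp (x r))
      _ = (∏ r, p (x r)) * (∑ k, h (x k)) ^ 2 := by ring
  -- sum it up
  have hsum : ((N:ℝ) * ε) ^ 2 * (∑ x ∈ Finset.univ.filter
      (fun x : Fin N → Fin d => (2:ℝ) ^ (-(N:ℝ) * s) < ∏ k, p (x k)), (∏ k, p (x k)))
      ≤ (N:ℝ) * V := by
    rw [Finset.mul_sum]
    calc ∑ x ∈ Finset.univ.filter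
          (fun x : Fin N → Fin d => (2:ℝ) ^ (-(N:ℝ) * s) < ∏ k, p (x k)),
          ((N:ℝ) * ε) ^ 2 * (∏ k, p (x k))
        ≤ ∑ x ∈ Finset.univ.filter
          (fun x : Fin N → Fin d => (2:ℝ) ^ (-(N:ℝ) * s) < ∏ k, p (x k)),
          (∏ r, p (x r)) * (∑ k, h (x k)) ^ 2 := by
          refine Finset.sum_le_sum fun x hx => ?_
          exact hevent x (Finset.mem_filter.mp hx).2
      _ ≤ ∑ x : Fin N → Fin d, (∏ r, p (x r)) * (∑ k, h (x k)) ^ 2 := by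
          refine Finset.sum_le_sum_of_subset_of_nonneg (Finset.filter_subset _ _) ?_
          intro x _ _
          exact mul_nonneg (Finset.prod_nonneg fun r _ => hp (x r)) (sq_nonneg _)
      _ = N * V := ident
  have hc : (0:ℝ) < ((N:ℝ) * ε) ^ 2 := by positivity
  rw [← le_div_iff₀' hc] at hsum
  refine hsum.trans ?_
  rw [mul_pow]
  rw [div_le_div_iff₀ (by positivity) (by positivity)]
  ring_nf
  nlinarith [hV0, hN0, sq_nonneg ε, mul_pos hN0 hN0, hε0]

/-- Source coding, converse part: at any rate `R < S(ρ)`, every compression scheme through a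
system of dimension at most `2^{NR}` has entanglement fidelity at most `δ` for large `N`. -/
theorem source_coding_converse (d : ℕ)
    (ρ : Matrix (Fin d) (Fin d) ℂ) (hρ : ρ.PosSemidef) (htr : ρ.trace = 1)
    (R : ℝ) (hR : R < vnEntropy hρ.1) (δ : ℝ) (hδ : 0 < δ) :
    ∃ N₀ : ℕ, ∀ N ≥ N₀,
      ∀ m : ℕ, (m : ℝ) ≤ (2 : ℝ) ^ ((N : ℝ) * R) →
      ∀ (nE : ℕ) (E : Fin nE → Matrix (Fin m) (Fin N → Fin d) ℂ),
        (∑ i, (E i)ᴴ * E i = 1) →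
      ∀ (nD : ℕ) (D : Fin nD → Matrix (Fin N → Fin d) (Fin m) ℂ),
        (∑ j, (D j)ᴴ * D j = 1) →
        ∑ i, ∑ j, ‖(tpow ρ N * (D j * E i)).trace‖ ^ 2 ≤ δ := by
  classical
  set p : Fin d → ℝ := hρ.1.eigenvalues with hp_def
  have hp : ∀ i, 0 ≤ p i := fun i => hρ.eigenvalues_nonneg i
  set W : Matrix (Fin d) (Fin d) ℂ := (hρ.1.eigenvectorUnitary : Matrix (Fin d) (Fin d) ℂ)
    with hW_def
  have hW1 : Wᴴ * W = 1 := by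
    rw [← Matrix.star_eq_conjTranspose]
    exact (Matrix.mem_unitaryGroup_iff').mp (hρ.1.eigenvectorUnitary).2
  have hW2 : W * Wᴴ = 1 := by
    rw [← Matrix.star_eq_conjTranspose]
    exact (Matrix.mem_unitaryGroup_iff).mp (hρ.1.eigenvectorUnitary).2
  have hspec : ρ = W * Matrix.diagonal (fun i => (p i : ℂ)) * Wᴴ := by
    rw [← Matrix.star_eq_conjTranspose]
    convert hρ.1.spectral_theorem using 2
    rw [Unitary.conjStarAlgAut_apply]
    rfl
  have hp1 : ∑ i, p i = 1 := by
    have h1 : ρ.trace = ∑ i, (p i : ℂ) := by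
      conv_lhs => rw [hspec]
      rw [Matrix.trace_mul_cycle, hW1, Matrix.one_mul, Matrix.trace_diagonal]
    rw [htr] at h1
    exact_mod_cast h1.symm
  set Sp : ℝ := ∑ i, p i * (-Real.logb 2 (p i)) with hSp_def
  have hSR : R < Sp := by
    have : Sp = vnEntropy hρ.1 := by
      simp [hSp_def, vnEntropy, mul_neg, hp_def]
    rw [this]; exact hR
  set s' : ℝ := (R + Sp) / 2 with hs'_def
  have hRs : R < s' := by rw [hs'_def]; linarith
  have hsS : s' < Sp := by rw [hs'_def]; linarith
  set ε : ℝ := Sp - s' with hε_def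
  have hε0 : 0 < ε := by rw [hε_def]; linarith
  set Vst : ℝ := ∑ i, p i * (-Real.logb 2 (p i) - Sp) ^ 2 with hVst_def
  set c : ℝ := Real.sqrt (δ / 4) with hc_def
  have hc0 : 0 < c := Real.sqrt_pos.mpr (by linarith)
  have hcsq : c ^ 2 = δ / 4 := Real.sq_sqrt (by linarith)
  -- eventualities
  have hbase : (0:ℝ) ≤ (2:ℝ) ^ (R - s') ∧ (2:ℝ) ^ (R - s') < 1 := by
    constructor
    · positivity
    · exact Real.rpow_lt_one_of_one_lt_of_neg one_lt_two (by linarith)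
  have ev1 : ∀ᶠ N : ℕ in Filter.atTop, ((2:ℝ) ^ (R - s')) ^ N ≤ c := by
    have := tendsto_pow_atTop_nhds_zero_of_lt_one hbase.1 hbase.2
    exact (this.eventually_lt_const hc0).mono fun N h => le_of_lt h
  have ev2 : ∀ᶠ N : ℕ in Filter.atTop, Vst / ε ^ 2 / (N : ℝ) ≤ c := by
    have := tendsto_const_div_atTop_nhds_zero_nat (Vst / ε ^ 2)
    exact (this.eventually_lt_const hc0).mono fun N h => le_of_lt h
  have ev3 : ∀ᶠ N : ℕ in Filter.atTop, 1 ≤ N := Filter.eventually_ge_atTop 1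
  obtain ⟨N₀, hN₀⟩ := Filter.eventually_atTop.mp ((ev1.and ev2).and ev3)
  refine ⟨N₀, fun N hN m hm nE E hE nD D hD => ?_⟩
  obtain ⟨⟨hgeom, hvar⟩, hN1⟩ := hN₀ N hN
  -- setup
  set q : (Fin N → Fin d) → ℝ := fun x => ∏ k, p (x k) with hq_def
  have hq : ∀ x, 0 ≤ q x := fun x => Finset.prod_nonneg fun k _ => hp (x k)
  set t : ℝ := (2:ℝ) ^ (-(N:ℝ) * s') with ht_def
  have ht0 : 0 < t := Real.rpow_pos_of_pos two_pos _
  set V : Matrix (Fin N → Fin d) (Fin N → Fin d) ℂ := tpow W N with hV_def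
  have hVu1 : Vᴴ * V = 1 := by
    rw [hV_def, ← tpow_conjTranspose, ← tpow_mul, hW1, tpow_one]
  have hVu2 : V * Vᴴ = 1 := by
    rw [hV_def, ← tpow_conjTranspose, ← tpow_mul, hW2, tpow_one]
  have htpow : tpow ρ N = V * Matrix.diagonal (fun x => (q x : ℂ)) * Vᴴ := by
    conv_lhs => rw [hspec]
    rw [tpow_mul, tpow_mul, tpow_conjTranspose, tpow_diagonal]
    congr 2
    funext x
    rw [hq_def]
    push_cast
    rfl
  set E' : Fin nE → Matrix (Fin m) (Fin N → Fin d) ℂ := fun i => E i * V with hE'_def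
  set D' : Fin nD → Matrix (Fin N → Fin d) (Fin m) ℂ := fun j => Vᴴ * D j with hD'_def
  have hE' : ∑ i, (E' i)ᴴ * E' i = 1 := by
    have h2 : ∀ i, (E' i)ᴴ * E' i = Vᴴ * (((E i)ᴴ * E i) * V) := by
      intro i
      rw [hE'_def, Matrix.conjTranspose_mul, Matrix.mul_assoc, Matrix.mul_assoc]
    rw [Finset.sum_congr rfl fun i _ => h2 i, ← Matrix.mul_sum, ← Matrix.sum_mul, hE,
      Matrix.one_mul, hVu1]
  have hD' : ∑ j, (D' j)ᴴ * D' j = 1 := by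
    have h2 : ∀ j, (D' j)ᴴ * D' j = (D j)ᴴ * ((V * Vᴴ) * D j) := by
      intro j
      rw [hD'_def, Matrix.conjTranspose_mul, Matrix.conjTranspose_conjTranspose,
        Matrix.mul_assoc, Matrix.mul_assoc]
    rw [Finset.sum_congr rfl fun j _ => h2 j]
    simp_rw [hVu2, Matrix.one_mul]
    exact hD
  have htrace : ∀ i j, (tpow ρ N * (D j * E i)).trace
      = (Matrix.diagonal (fun x => (q x : ℂ)) * (D' j * E' i)).trace := by
    intro i j
    rw [htpow]
    set Q : Matrix (Fin N → Fin d) (Fin N → Fin d) ℂ :=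
      Matrix.diagonal (fun x => (q x : ℂ)) with hQ_def
    calc (V * Q * Vᴴ * (D j * E i)).trace
        = (V * (Q * (Vᴴ * (D j * E i)))).trace := by
          rw [Matrix.mul_assoc, Matrix.mul_assoc]
      _ = ((Q * (Vᴴ * (D j * E i))) * V).trace := Matrix.trace_mul_comm _ _
      _ = (Q * ((Vᴴ * (D j * E i)) * V)).trace := by rw [Matrix.mul_assoc]
      _ = (Q * (D' j * E' i)).trace := by
          rw [hD'_def, hE'_def]
          congr 1
          rw [Matrix.mul_assoc, Matrix.mul_assoc, Matrix.mul_assoc]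
  -- apply keyBound
  have hkey := keyBound q hq t (le_of_lt ht0) E' hE' D' hD'
  have hrw : (∑ i, ∑ j, ‖(tpow ρ N * (D j * E i)).trace‖ ^ 2)
      = ∑ i, ∑ j, ‖(Matrix.diagonal (fun x => (q x : ℂ)) * (D' j * E' i)).trace‖ ^ 2 :=
    Finset.sum_congr rfl fun i _ => Finset.sum_congr rfl fun j _ => by rw [htrace i j]
  rw [hrw]
  refine hkey.trans ?_
  -- bound the two parts
  have hmt : (m : ℝ) * t ≤ c := by
    have h1 : (m : ℝ) * t ≤ (2:ℝ) ^ ((N:ℝ) * R) * t :=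
      mul_le_mul_of_nonneg_right hm (le_of_lt ht0)
    have h2 : (2:ℝ) ^ ((N:ℝ) * R) * t = ((2:ℝ) ^ (R - s')) ^ N := by
      rw [ht_def, ← Real.rpow_natCast ((2:ℝ) ^ (R - s')) N, ← Real.rpow_mul (by norm_num)]
      rw [← Real.rpow_add two_pos]
      congr 1
      ring
    linarith [h1, h2 ▸ h1, hgeom]
  have hmt0 : 0 ≤ (m : ℝ) * t := by positivity
  have hpart1 : 2 * ((m : ℝ) * t) ^ 2 ≤ δ / 2 := by
    have := pow_le_pow_left₀ hmt0 hmt 2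
    rw [hcsq] at this
    linarith
  have hβ : ∑ x ∈ Finset.univ.filter fun x => t < q x, q x ≤ c := by
    have hch := cheb p hp hp1 s' (by rw [← hSp_def]; exact hsS) N hN1
    have heq : Vst / ((N : ℝ) * ε ^ 2) = Vst / ε ^ 2 / (N : ℝ) := by
      rw [div_div]
      congr 1
      ring
    calc ∑ x ∈ Finset.univ.filter fun x => t < q x, q x
        ≤ Vst / ((N : ℝ) * ε ^ 2) := by
          have : (∑ i, p i * (-Real.logb 2 (p i) - ∑ i, p i * (-Real.logb 2 (p i))) ^ 2)
              / ((N : ℝ) * (∑ i, p i * (-Real.logb 2 (p i)) - s') ^ 2)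
              = Vst / ((N : ℝ) * ε ^ 2) := by
            rw [hVst_def, hε_def, hSp_def]
          rw [← this]
          exact hch
      _ = Vst / ε ^ 2 / (N : ℝ) := heq
      _ ≤ c := hvar
  have hβ0 : 0 ≤ ∑ x ∈ Finset.univ.filter fun x => t < q x, q x :=
    Finset.sum_nonneg fun x _ => hq x
  have hpart2 : 2 * (∑ x ∈ Finset.univ.filter fun x => t < q x, q x) ^ 2 ≤ δ / 2 := by
    have := pow_le_pow_left₀ hβ0 hβ 2
    rw [hcsq] at this
    linarith
  linarith
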